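/- arXiv:1004.1451 — 3 statements merged into one kernel-verified Lean document; each statement's English description precedes it below -/
import Mathlib

section
/- Let B ∈ ℝ^{n×n} satisfy Bᵀ𝟏 = 0, where 𝟏 ∈ ℝⁿ is the all-ones vector, and suppose the kernel of B is the one-dimensional span of a strictly positive vector x* (every component of x* is positive). Then range(B) ∩ ker(B) = {0}. -/
open Matrix

/-- If `Bᵀ𝟏 = 0` and the kernel of `B` is the span of a strictly
positive vector `x*`, then `range(B) ∩ ker(B) = {0}`. -/
theorem stmt_3 (n : ℕ) (B : Matrix (Fin n) (Fin n) ℝ)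
    (hB : Bᵀ *ᵥ (fun _ => (1 : ℝ)) = 0)
    (x : Fin n → ℝ) (hx : ∀ i, 0 < x i)
    (hker : LinearMap.ker B.mulVecLin = Submodule.span ℝ {x}) :
    LinearMap.range B.mulVecLin ⊓ LinearMap.ker B.mulVecLin = ⊥ := by
  rcases Nat.eq_zero_or_pos n with hn | hn
  · subst hn
    apply Submodule.eq_bot_of_subsingleton
  ext v
  simp only [Submodule.mem_inf, Submodule.mem_bot]
  constructor
  · rintro ⟨⟨z, hz⟩, hk⟩
    rw [hker, Submodule.mem_span_singleton] at hk
    obtain ⟨c, hc⟩ := hk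
    -- sum of entries of v is 0
    have hsum : ∑ i, v i = 0 := by
      have : (fun _ => (1 : ℝ)) ⬝ᵥ v = 0 := by
        rw [← hz]
        simp only [mulVecLin_apply]
        rw [dotProduct_mulVec, ← mulVec_transpose, hB]
        simp [dotProduct]
      simpa [dotProduct] using this
    have hsx : 0 < ∑ i, x i := by
      apply Finset.sum_pos (fun i _ => hx i)
      exact ⟨⟨0, hn⟩, Finset.mem_univ _⟩
    have : c * ∑ i, x i = 0 := by
      rw [← hsum, ← hc]
      simp [Finset.mul_sum]
    have hc0 : c = 0 := by
      rcases mul_eq_zero.mp this with h | h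
      · exact h
      · exact absurd h hsx.ne'
    rw [← hc, hc0, zero_smul]
  · rintro rfl
    exact ⟨Submodule.zero_mem _, Submodule.zero_mem _⟩
end

section
/- (Lemma 4.1) Let A ∈ ℝ^{n×n} be a column-stochastic irreducible matrix, i.e. all entries of A are nonnegative, every column of A sums to 1 (Aᵀ𝟏 = 𝟏), and for every nonempty proper subset S ⊊ {1,…,n} there exist indices i ∉ S and j ∈ S with A_{ij} ≠ 0. Let B = I − A. Then range(B) ∩ ker(B) = {0}. -/
open Matrix

/-- Lemma 4.1: If `A` is a column-stochastic irreducible real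
matrix and `B = I - A`, then `range(B) ∩ ker(B) = {0}`. -/
theorem stmt_4 (n : ℕ) (A : Matrix (Fin n) (Fin n) ℝ)
    (hpos : ∀ i j, 0 ≤ A i j)
    (hcol : Aᵀ *ᵥ (fun _ => (1 : ℝ)) = fun _ => (1 : ℝ))
    (hirr : ∀ S : Set (Fin n), S.Nonempty → S ≠ Set.univ →
      ∃ i ∉ S, ∃ j ∈ S, A i j ≠ 0) :
    LinearMap.range ((1 : Matrix (Fin n) (Fin n) ℝ) - A).mulVecLin ⊓
      LinearMap.ker ((1 : Matrix (Fin n) (Fin n) ℝ) - A).mulVecLin = ⊥ := by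
  rw [eq_bot_iff]
  rintro x ⟨hx1, hx2⟩
  simp only [Submodule.mem_bot]
  obtain ⟨z, hz⟩ := hx1
  have hker : (1 - A) *ᵥ x = 0 := hx2
  -- column sums are 1
  have hc : ∀ j, ∑ i, A i j = 1 := by
    intro j
    have := congrFun hcol j
    simpa [Matrix.mulVec, dotProduct] using this
  -- A x = x
  have hAx : A *ᵥ x = x := by
    have h1 : x - A *ᵥ x = 0 := by
      simpa [Matrix.sub_mulVec, Matrix.one_mulVec] using hker
    have := sub_eq_zero.mp h1
    exact this.symm
  -- sum of x is 0
  have hsum : ∑ i, x i = 0 := by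
    have hx : x = z - A *ᵥ z := by
      rw [← hz]
      simp [Matrix.mulVecLin_apply, Matrix.sub_mulVec, Matrix.one_mulVec]
    rw [hx]
    have : ∑ i, (A *ᵥ z) i = ∑ i, z i := by
      simp only [Matrix.mulVec, dotProduct]
      rw [Finset.sum_comm]
      calc ∑ j, ∑ i, A i j * z j = ∑ j, (∑ i, A i j) * z j := by
            simp [Finset.sum_mul]
        _ = ∑ j, z j := by simp [hc]
    simp [Finset.sum_sub_distrib, this]
  set y : Fin n → ℝ := fun i => |x i| with hy
  -- A y ≥ y componentwise
  have hyge : ∀ i, y i ≤ (A *ᵥ y) i := by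
    intro i
    have h1 : y i = |(A *ᵥ x) i| := by rw [hAx]
    rw [h1]
    simp only [Matrix.mulVec, dotProduct]
    calc |∑ j, A i j * x j| ≤ ∑ j, |A i j * x j| := Finset.abs_sum_le_sum_abs _ _
      _ = ∑ j, A i j * y j := by
          refine Finset.sum_congr rfl fun j _ => ?_
          rw [abs_mul, abs_of_nonneg (hpos i j)]
  -- total sums equal
  have hsumAy : ∑ i, (A *ᵥ y) i = ∑ i, y i := by
    simp only [Matrix.mulVec, dotProduct]
    rw [Finset.sum_comm]
    calc ∑ j, ∑ i, A i j * y j = ∑ j, (∑ i, A i j) * y j := by simp [Finset.sum_mul]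
      _ = ∑ j, y j := by simp [hc]
  -- hence A y = y componentwise
  have hAy : ∀ i, (A *ᵥ y) i = y i := by
    have hzero : ∑ i, ((A *ᵥ y) i - y i) = 0 := by
      rw [Finset.sum_sub_distrib, hsumAy, sub_self]
    have hnn : ∀ i ∈ Finset.univ, 0 ≤ (A *ᵥ y) i - y i := fun i _ =>
      sub_nonneg.mpr (hyge i)
    intro i
    have := (Finset.sum_eq_zero_iff_of_nonneg hnn).mp hzero i (Finset.mem_univ i)
    linarith
  by_contra hx0
  obtain ⟨j0, hj0⟩ : ∃ j, x j ≠ 0 := Function.ne_iff.mp hx0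
  -- all entries of x are nonzero
  have hne : ∀ i, x i ≠ 0 := by
    by_contra hcon
    push_neg at hcon
    obtain ⟨i0, hi0⟩ := hcon
    set T : Set (Fin n) := {i | x i ≠ 0} with hT
    obtain ⟨i, hiT, j, hjT, hAij⟩ := hirr T ⟨j0, hj0⟩ (by
      intro h
      have : i0 ∈ T := h ▸ Set.mem_univ i0
      exact this hi0)
    have hxi : x i = 0 := not_not.mp hiT
    have hyi : y i = 0 := by simp [hy, hxi]
    have hyj : 0 < y j := abs_pos.mpr hjT
    have hlt : 0 < (A *ᵥ y) i := by
      simp only [Matrix.mulVec, dotProduct]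
      have hterm : 0 < A i j * y j :=
        mul_pos (lt_of_le_of_ne (hpos i j) (Ne.symm hAij)) hyj
      refine lt_of_lt_of_le hterm ?_
      exact Finset.single_le_sum (fun k _ => mul_nonneg (hpos i k) (abs_nonneg _))
        (Finset.mem_univ j)
    rw [hAy i, hyi] at hlt
    exact lt_irrefl 0 hlt
  -- positive and negative index sets
  have hNe : (Finset.univ : Finset (Fin n)).Nonempty := ⟨j0, Finset.mem_univ j0⟩
  have hPne : ∃ j, 0 < x j := by
    by_contra h
    push_neg at h
    have hneg : ∀ i, x i < 0 := fun i => lt_of_le_of_ne (h i) (hne i)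
    have : ∑ i, x i < 0 := Finset.sum_neg (fun i _ => hneg i) hNe
    linarith
  have hNne : ∃ j, x j < 0 := by
    by_contra h
    push_neg at h
    have hposx : ∀ i, 0 < x i := fun i => lt_of_le_of_ne (h i) (Ne.symm (hne i))
    have : 0 < ∑ i, x i := Finset.sum_pos (fun i _ => hposx i) hNe
    linarith
  -- if x i < 0 then A i j = 0 for every j with x j > 0
  have hkey : ∀ i, x i < 0 → ∀ j, 0 < x j → A i j = 0 := by
    intro i hi j hj
    have hsum0 : ∑ k, A i k * (x k + y k) = 0 := by
      have h1 : ∑ k, A i k * x k = x i := by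
        have := congrFun hAx i
        simpa [Matrix.mulVec, dotProduct] using this
      have h2 : ∑ k, A i k * y k = y i := by
        have := hAy i
        simpa [Matrix.mulVec, dotProduct] using this
      have h3 : y i = -x i := abs_of_neg hi
      simp only [mul_add, Finset.sum_add_distrib, h1, h2, h3]
      ring
    have hnn : ∀ k ∈ Finset.univ, 0 ≤ A i k * (x k + y k) := by
      intro k _
      have : 0 ≤ x k + y k := by
        have := neg_abs_le (x k)
        simp only [hy]
        linarith
      exact mul_nonneg (hpos i k) this
    have := (Finset.sum_eq_zero_iff_of_nonneg hnn).mp hsum0 j (Finset.mem_univ j)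
    have hpos' : 0 < x j + y j := by
      have : 0 < y j := abs_pos.mpr (hne j)
      simp only [hy] at this ⊢
      have := abs_of_pos hj
      linarith [abs_pos.mpr (hne j)]
    exact (mul_eq_zero.mp this).resolve_right (ne_of_gt hpos')
  -- contradiction via irreducibility on the positive set
  obtain ⟨jp, hjp⟩ := hPne
  obtain ⟨jn, hjn⟩ := hNne
  set P : Set (Fin n) := {j | 0 < x j} with hP
  obtain ⟨i, hiP, j, hjP, hAij⟩ := hirr P ⟨jp, hjp⟩ (by
    intro h
    have : jn ∈ P := h ▸ Set.mem_univ jn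
    simp only [hP, Set.mem_setOf_eq] at this
    linarith)
  have hxi : x i < 0 := by
    rcases lt_or_gt_of_ne (hne i) with h | h
    · exact h
    · exact absurd h hiP
  exact hAij (hkey i hxi j hjP)
end

section
/- Let A ∈ ℝ^{n×n} be a column-stochastic irreducible matrix, i.e. all entries of A are nonnegative, every column of A sums to 1 (Aᵀ𝟏 = 𝟏), and for every nonempty proper subset S ⊊ {1,…,n} there exist indices i ∉ S and j ∈ S with A_{ij} ≠ 0. Let B = I − A. Then ℝⁿ is the (internal) direct sum of range(B) and ker(B): range(B) ∩ ker(B) = {0} and range(B) + ker(B) = ℝⁿ. -/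
open Matrix

section Aux

variable {n : ℕ} (A : Matrix (Fin n) (Fin n) ℝ)

lemma colsum_aux (hcol : Aᵀ *ᵥ (fun _ => (1 : ℝ)) = fun _ => (1 : ℝ)) (j : Fin n) :
    ∑ i, A i j = 1 := by
  have := congrFun hcol j
  simpa [mulVec, dotProduct, transpose_apply] using this

lemma key_aux (hpos : ∀ i j, 0 ≤ A i j)
    (hcol : Aᵀ *ᵥ (fun _ => (1 : ℝ)) = fun _ => (1 : ℝ))
    (hirr : ∀ S : Set (Fin n), S.Nonempty → S ≠ Set.univ →
      ∃ i ∉ S, ∃ j ∈ S, A i j ≠ 0)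
    (x : Fin n → ℝ) (hx : A *ᵥ x = x) (hsum : ∑ i, x i = 0) : x = 0 := by
  by_contra hx0
  set y : Fin n → ℝ := fun i => |x i| with hy
  -- pointwise inequality A y ≥ y
  have hineq : ∀ i, y i ≤ (A *ᵥ y) i := by
    intro i
    have : |(A *ᵥ x) i| ≤ (A *ᵥ y) i := by
      simp only [mulVec, dotProduct]
      calc |∑ j, A i j * x j| ≤ ∑ j, |A i j * x j| := Finset.abs_sum_le_sum_abs _ _
        _ = ∑ j, A i j * y j := by
            refine Finset.sum_congr rfl fun j _ => ?_
            rw [abs_mul, abs_of_nonneg (hpos i j)]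
    rwa [hx] at this
  -- equal total sums
  have hsumsA : ∀ z : Fin n → ℝ, ∑ i, (A *ᵥ z) i = ∑ i, z i := by
    intro z
    simp only [mulVec, dotProduct]
    rw [Finset.sum_comm]
    refine Finset.sum_congr rfl fun j _ => ?_
    rw [← Finset.sum_mul, colsum_aux A hcol j, one_mul]
  -- hence A y = y
  have hAy : A *ᵥ y = y := by
    have hzero : ∑ i, ((A *ᵥ y) i - y i) = 0 := by
      rw [Finset.sum_sub_distrib, hsumsA y, sub_self]
    have heach : ∀ i ∈ Finset.univ, (0:ℝ) ≤ (A *ᵥ y) i - y i := fun i _ =>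
      sub_nonneg.2 (hineq i)
    funext i
    have := (Finset.sum_eq_zero_iff_of_nonneg heach).1 hzero i (Finset.mem_univ i)
    linarith [this]
  -- all entries nonzero
  have hall : ∀ i, x i ≠ 0 := by
    by_contra hc
    push_neg at hc
    obtain ⟨i0, hi0⟩ := hc
    set S : Set (Fin n) := {j | x j ≠ 0} with hS
    have hSne : S.Nonempty := by
      by_contra h
      rw [Set.not_nonempty_iff_eq_empty] at h
      apply hx0
      funext k
      by_contra hk
      have : k ∈ S := hk
      rw [h] at this
      exact this
    have hSnu : S ≠ Set.univ := by
      intro h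
      have : i0 ∈ S := h ▸ Set.mem_univ i0
      exact this hi0
    obtain ⟨i, hiS, j, hjS, hAij⟩ := hirr S hSne hSnu
    -- y i = 0, sum of nonneg terms zero but A i j * y j > 0
    have hyi : y i = 0 := by
      simp only [hS, Set.mem_setOf_eq, not_not] at hiS
      simp [hy, hiS]
    have hsum0 : ∑ k, A i k * y k = 0 := by
      have := congrFun hAy i
      simpa [mulVec, dotProduct, hyi] using this
    have hterm := (Finset.sum_eq_zero_iff_of_nonneg
      (fun k _ => mul_nonneg (hpos i k) (abs_nonneg (x k)))).1 hsum0 j (Finset.mem_univ j)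
    have hyj : 0 < y j := abs_pos.2 hjS
    have : A i j = 0 := by
      rcases mul_eq_zero.1 hterm with h | h
      · exact h
      · exact absurd h (ne_of_gt hyj)
    exact hAij this
  -- sign argument
  rcases em (∀ i, 0 < x i) with hposall | hnp
  · -- sum positive, contradiction (n > 0 since x ≠ 0)
    have hn : 0 < n := by
      rcases Nat.eq_zero_or_pos n with h | h
      · exfalso; apply hx0; funext i; exact absurd i.2 (by omega)
      · exact h
    have : 0 < ∑ i, x i :=
      Finset.sum_pos (fun i _ => hposall i) (by simpa using Finset.univ_nonempty_iff.2 ⟨⟨0, hn⟩⟩)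
    linarith
  rcases em (∀ i, x i < 0) with hnegall | hnn
  · have hn : 0 < n := by
      rcases Nat.eq_zero_or_pos n with h | h
      · exfalso; apply hx0; funext i; exact absurd i.2 (by omega)
      · exact h
    have : ∑ i, x i < 0 :=
      Finset.sum_neg (fun i _ => hnegall i) (by simpa using Finset.univ_nonempty_iff.2 ⟨⟨0, hn⟩⟩)
    linarith
  -- mixed signs: contradiction via irreducibility
  push_neg at hnp hnn
  obtain ⟨p, hp⟩ := hnp
  obtain ⟨q, hq⟩ := hnn
  have hpneg : x p < 0 := lt_of_le_of_ne hp (hall p)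
  have hqpos : 0 < x q := lt_of_le_of_ne hq (Ne.symm (hall q))
  set S : Set (Fin n) := {j | x j < 0} with hS
  have hSne : S.Nonempty := ⟨p, hpneg⟩
  have hSnu : S ≠ Set.univ := by
    intro h
    have : q ∈ S := h ▸ Set.mem_univ q
    exact absurd hqpos (not_lt.2 (le_of_lt this))
  obtain ⟨i, hiS, j, hjS, hAij⟩ := hirr S hSne hSnu
  have hxi : 0 < x i := by
    have := hall i
    simp only [hS, Set.mem_setOf_eq, not_lt] at hiS
    exact lt_of_le_of_ne hiS (Ne.symm this)
  have hxj : x j < 0 := hjS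
  -- row i: ∑ A i k * (y k - x k) = 0, all terms nonneg, term j positive
  have hrow : ∑ k, A i k * (y k - x k) = 0 := by
    have h1 := congrFun hAy i
    have h2 := congrFun hx i
    have hyi : y i = x i := abs_of_pos hxi
    simp only [mulVec, dotProduct] at h1 h2
    have : ∑ k, (A i k * y k - A i k * x k) = y i - x i := by
      rw [Finset.sum_sub_distrib, h1, h2]
    simpa [mul_sub, hyi] using this
  have hterm := (Finset.sum_eq_zero_iff_of_nonneg
    (fun k _ => mul_nonneg (hpos i k) (by simp [hy]; exact le_abs_self (x k)))).1
    hrow j (Finset.mem_univ j)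
  have hyxj : 0 < y j - x j := by
    have : y j = -x j := abs_of_neg hxj
    rw [this]; linarith
  rcases mul_eq_zero.1 hterm with h | h
  · exact hAij h
  · exact absurd h (ne_of_gt hyxj)

end Aux

/-- If `A` is a column-stochastic irreducible real matrix and
`B = I - A`, then `ℝⁿ` is the internal direct sum of `range(B)` and `ker(B)`:
their intersection is trivial and their sum is all of `ℝⁿ`. -/
theorem stmt_5 (n : ℕ) (A : Matrix (Fin n) (Fin n) ℝ)
    (hpos : ∀ i j, 0 ≤ A i j)
    (hcol : Aᵀ *ᵥ (fun _ => (1 : ℝ)) = fun _ => (1 : ℝ))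
    (hirr : ∀ S : Set (Fin n), S.Nonempty → S ≠ Set.univ →
      ∃ i ∉ S, ∃ j ∈ S, A i j ≠ 0) :
    LinearMap.range ((1 : Matrix (Fin n) (Fin n) ℝ) - A).mulVecLin ⊓
      LinearMap.ker ((1 : Matrix (Fin n) (Fin n) ℝ) - A).mulVecLin = ⊥ ∧
    LinearMap.range ((1 : Matrix (Fin n) (Fin n) ℝ) - A).mulVecLin ⊔
      LinearMap.ker ((1 : Matrix (Fin n) (Fin n) ℝ) - A).mulVecLin = ⊤ := by
  set B := (1 : Matrix (Fin n) (Fin n) ℝ) - A with hB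
  have hinf : LinearMap.range B.mulVecLin ⊓ LinearMap.ker B.mulVecLin = ⊥ := by
    rw [eq_bot_iff]
    rintro x ⟨⟨z, hz⟩, hker⟩
    have hker' : B *ᵥ x = 0 := hker
    have hAx : A *ᵥ x = x := by
      have : x - A *ᵥ x = 0 := by
        simpa [hB, sub_mulVec, one_mulVec] using hker'
      linear_combination (norm := module) -this
    have hxz : x = z - A *ᵥ z := by
      have : B.mulVecLin z = x := hz
      simp only [mulVecLin_apply, hB, sub_mulVec, one_mulVec] at this
      exact this.symm
    have hsumsA : ∑ i, (A *ᵥ z) i = ∑ i, z i := by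
      simp only [mulVec, dotProduct]
      rw [Finset.sum_comm]
      refine Finset.sum_congr rfl fun j _ => ?_
      rw [← Finset.sum_mul, colsum_aux A hcol j, one_mul]
    have hsum : ∑ i, x i = 0 := by
      rw [hxz]
      simp only [Pi.sub_apply]
      rw [Finset.sum_sub_distrib, hsumsA, sub_self]
    have := key_aux A hpos hcol hirr x hAx hsum
    simpa using this
  refine ⟨hinf, ?_⟩
  have h1 : Module.finrank ℝ ↥(LinearMap.range B.mulVecLin) +
      Module.finrank ℝ ↥(LinearMap.ker B.mulVecLin) = n := by
    simpa using LinearMap.finrank_range_add_finrank_ker B.mulVecLin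
  have h2 := Submodule.finrank_sup_add_finrank_inf_eq
    (LinearMap.range B.mulVecLin) (LinearMap.ker B.mulVecLin)
  rw [hinf] at h2
  simp only [finrank_bot, add_zero] at h2
  apply Submodule.eq_top_of_finrank_eq
  rw [h2, h1]
  simp
end
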